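/- arXiv:math/9810182 — 2 statements merged into one kernel-verified Lean document; each statement's English description precedes it below -/
import Mathlib

section
/- Let q > 1 be odd and squarefree and let w be any integer. Then H(w; q) = Σ_{q₁ q₂ = q} μ(q₁) χ_{q₁}(−1) H*(q̄₁ w; q₂), where the sum runs over all factorizations of q into positive integers q₁ q₂ = q, q̄₁ denotes an integer with q̄₁ q₁ ≡ 1 (mod q₂), μ is the Möbius function, and by convention H*(·; 1) = 1 and χ_1(−1) = 1. -/
/-!
Sort the pairs `(u, v)` by `d = gcd(uv - 1, q)`. Since `q` is squarefree, `q = d m` with `d, m`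
coprime, and the Chinese remainder theorem splits the `d`-part of `H(w; q)` into a sum modulo `d`
over the hyperbola `uv ≡ 1`, where the additive character is trivial, times the reduced sum
`H*(d̄ w; m)`: writing `uv - 1 = d s`, one has `e_q((uv - 1) w) = e_m(s w) = e_m(d̄ (uv - 1) w)`.
The hyperbola sum is multiplicative in `d`, and modulo an odd prime `p` the substitution `v = u⁻¹`
turns `χ(uv(u + 1)(v + 1))` into `χ(u) χ(u⁻¹(u + 1))²`, so it equals
`∑_{u ≠ -1} χ(u) = -χ(-1)`. Hence it is `μ(d) χ_d(-1)` for odd squarefree `d`.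
-/

/-- `e_c(x) = exp(2πix/c)`. -/
noncomputable def ec (c : ℕ) (x : ℤ) : ℂ :=
  Complex.exp (2 * Real.pi * Complex.I * x / c)

/-- The Kloosterman sum `S(m, n; c) = Σ_{a d ≡ 1 (mod c)} e_c(a m + d n)`. -/
noncomputable def kloos (m n : ℤ) (c : ℕ) : ℂ :=
  ∑ a ∈ Finset.range c, ∑ d ∈ Finset.range c,
    if (a * d) % c = 1 % c then ec c (a * m + d * n) else 0

/-- `G(m, m₁, m₂; c)` : complete sum of Kloosterman sums twisted by `χ_q`, for `q ∣ c`. -/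
noncomputable def Gsum (q : ℕ) (m m1 m2 : ℤ) (c : ℕ) : ℂ :=
  ∑ a ∈ Finset.range c, ∑ a1 ∈ Finset.range c, ∑ a2 ∈ Finset.range c,
    (jacobiSym ((a : ℤ) * a1 * a2) q : ℂ) * kloos a ((a1 : ℤ) * a2) c *
      ec c (a * m + a1 * m1 + a2 * m2)

/-- `G'(m, m₁, m₂; c) = e_c(−m m₁ m₂) G(m, m₁, m₂; c)`. -/
noncomputable def Gsum' (q : ℕ) (m m1 m2 : ℤ) (c : ℕ) : ℂ :=
  ec c (-(m * m1 * m2)) * Gsum q m m1 m2 c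

/-- `H_r(m, m₁, m₂; q) = Σ_{u,v mod q} χ_q(v (u + v m₁)(v r − m)(u r + m m₁)) e_q(u m₂)`. -/
noncomputable def Hr (r m m1 m2 : ℤ) (q : ℕ) : ℂ :=
  ∑ u ∈ Finset.range q, ∑ v ∈ Finset.range q,
    (jacobiSym ((v : ℤ) * ((u : ℤ) + v * m1) * ((v : ℤ) * r - m) * ((u : ℤ) * r + m * m1)) q : ℂ) *
      ec q (u * m2)

/-- `H(w; q) = Σ_{u,v mod q} χ_q(u v (u+1)(v+1)) e_q((u v − 1) w)`. -/
noncomputable def Hw (w : ℤ) (q : ℕ) : ℂ :=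
  ∑ u ∈ Finset.range q, ∑ v ∈ Finset.range q,
    (jacobiSym ((u : ℤ) * v * ((u : ℤ) + 1) * ((v : ℤ) + 1)) q : ℂ) *
      ec q (((u : ℤ) * v - 1) * w)

/-- Reduced sum `H*(w; q)`, restricted by `gcd(uv − 1, q) = 1`. -/
noncomputable def Hstar (w : ℤ) (q : ℕ) : ℂ :=
  ∑ u ∈ Finset.range q, ∑ v ∈ Finset.range q,
    if Int.gcd ((u : ℤ) * v - 1) q = 1 then
      (jacobiSym ((u : ℤ) * v * ((u : ℤ) + 1) * ((v : ℤ) + 1)) q : ℂ) *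
        ec q (((u : ℤ) * v - 1) * w)
    else 0

/-- The Ramanujan sum `R(n; k) = Σ_{d mod k, (d,k)=1} e_k(d n)`. -/
noncomputable def Ram (n : ℤ) (k : ℕ) : ℂ :=
  ∑ d ∈ Finset.range k, if Nat.gcd d k = 1 then ec k (d * n) else 0

/-- The Gauss sum `τ(χ_q) = Σ_{x mod q} χ_q(x) e_q(x)`. -/
noncomputable def gaussτ (q : ℕ) : ℂ :=
  ∑ x ∈ Finset.range q, (jacobiSym (x : ℤ) q : ℂ) * ec q (x : ℤ)

open Finset

lemma ec_eq_toCircle (q : ℕ) [NeZero q] (x : ℤ) : ec q x = ZMod.toCircle (x : ZMod q) := by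
  rw [ZMod.toCircle_intCast, ec]

lemma ec_congr {q : ℕ} [NeZero q] {a b : ℤ} (h : a ≡ b [ZMOD q]) : ec q a = ec q b := by
  rw [ec_eq_toCircle, ec_eq_toCircle, (ZMod.intCast_eq_intCast_iff a b q).2 h]

lemma ec_mul_mul_left (d m : ℕ) [NeZero d] (x : ℤ) : ec (d * m) (d * x) = ec m x := by
  have hd : (d : ℂ) ≠ 0 := NeZero.ne _
  rw [ec, ec]
  congr 1
  push_cast
  rw [mul_comm (d : ℂ) (m : ℂ), ← div_div]
  field_simp

lemma ec_mul_eq_of_dvd {d m : ℕ} [NeZero d] [NeZero m] {t dinv : ℤ} (ht : (d : ℤ) ∣ t)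
    (hdinv : dinv * d ≡ 1 [ZMOD m]) : ec (d * m) t = ec m (dinv * t) := by
  obtain ⟨s, rfl⟩ := ht
  rw [ec_mul_mul_left, ← mul_assoc]
  exact ec_congr (by simpa using (hdinv.mul_right s).symm)

lemma sum_range_eq_sum_zmod {M : Type*} [AddCommMonoid M] (n : ℕ) [NeZero n] (f : ℕ → M) :
    ∑ u ∈ range n, f u = ∑ u : ZMod n, f u.val := by
  obtain ⟨k, rfl⟩ := Nat.exists_eq_succ_of_ne_zero (NeZero.ne n)
  exact (Fin.sum_univ_eq_sum_range f _).symm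

lemma ZMod.chineseRemainder_symm_val_modEq {d m : ℕ} [NeZero d] [NeZero m] (h : d.Coprime m)
    (p : ZMod d × ZMod m) :
    (((chineseRemainder h).symm p).val : ℤ) ≡ p.1.val [ZMOD d] ∧
      (((chineseRemainder h).symm p).val : ℤ) ≡ p.2.val [ZMOD m] := by
  obtain ⟨x, hx⟩ : ∃ x, (chineseRemainder h).symm p = x := ⟨_, rfl⟩
  have hp : p = (x.val : ZMod d × ZMod m) := by
    rw [← map_natCast (chineseRemainder h), natCast_zmod_val, ← hx, RingEquiv.apply_symm_apply]
  rw [hx, hp]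
  simp [← intCast_eq_intCast_iff]

lemma sum_range_mul_eq_mul_of_coprime {R : Type*} [CommSemiring R] {d m : ℕ} [NeZero d]
    [NeZero m] (h : d.Coprime m) (f f₁ f₂ : ℤ → ℤ → R)
    (hf : ∀ u v u₁ v₁ u₂ v₂ : ℤ, u ≡ u₁ [ZMOD d] → v ≡ v₁ [ZMOD d] →
      u ≡ u₂ [ZMOD m] → v ≡ v₂ [ZMOD m] → f u v = f₁ u₁ v₁ * f₂ u₂ v₂) :
    ∑ u ∈ range (d * m), ∑ v ∈ range (d * m), f u v =
      (∑ u ∈ range d, ∑ v ∈ range d, f₁ u v) * ∑ u ∈ range m, ∑ v ∈ range m, f₂ u v := by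
  set e := (ZMod.chineseRemainder h).toEquiv
  simp only [sum_range_eq_sum_zmod]
  calc ∑ x : ZMod (d * m), ∑ y : ZMod (d * m), f x.val y.val
      = ∑ p : ZMod d × ZMod m, ∑ r : ZMod d × ZMod m, f (e.symm p).val (e.symm r).val := by
        rw [← e.symm.sum_comp]
        exact sum_congr rfl fun p _ => (e.symm.sum_comp _).symm
    _ = ∑ p : ZMod d × ZMod m, ∑ r : ZMod d × ZMod m, f₁ p.1.val r.1.val * f₂ p.2.val r.2.val := by
        refine sum_congr rfl fun p _ => sum_congr rfl fun r _ => ?_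
        obtain ⟨hp₁, hp₂⟩ := ZMod.chineseRemainder_symm_val_modEq h p
        obtain ⟨hr₁, hr₂⟩ := ZMod.chineseRemainder_symm_val_modEq h r
        exact hf _ _ _ _ _ _ hp₁ hr₁ hp₂ hr₂
    _ = _ := by simp_rw [Fintype.sum_prod_type, sum_mul_sum]

lemma jacobiSym_mul_right_of_modEq {a a₁ a₂ : ℤ} {d m : ℕ} [NeZero d] [NeZero m]
    (h₁ : a ≡ a₁ [ZMOD d]) (h₂ : a ≡ a₂ [ZMOD m]) :
    jacobiSym a (d * m) = jacobiSym a₁ d * jacobiSym a₂ m := by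
  rw [jacobiSym.mul_right, jacobiSym.mod_left' h₁, jacobiSym.mod_left' h₂]

lemma Int.ModEq.gcd_eq {n a b : ℤ} (h : a ≡ b [ZMOD n]) : a.gcd n = b.gcd n := by
  rw [← Int.gcd_emod, h.eq, Int.gcd_emod]

lemma Int.gcd_mul_eq_left_iff {d m : ℕ} (h : d.Coprime m) (t : ℤ) :
    t.gcd (d * m : ℕ) = d ↔ (d : ℤ) ∣ t ∧ t.gcd m = 1 := by
  simp only [Int.gcd_eq_natAbs, Int.natAbs_natCast, Int.natCast_dvd, Nat.Coprime.gcd_mul _ h]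
  constructor
  · intro hd
    have hm : t.natAbs.gcd m = 1 :=
      ((h.coprime_dvd_right (Nat.gcd_dvd_right _ _)).symm).eq_one_of_dvd (Dvd.intro_left _ hd)
    rw [hm, mul_one] at hd
    exact ⟨hd ▸ Nat.gcd_dvd_left _ _, hm⟩
  · rintro ⟨hd, hm⟩
    rw [hm, mul_one, Nat.gcd_eq_right hd]

lemma quadraticChar_sum_hyperbola {F : Type*} [Field F] [Fintype F] [DecidableEq F]
    (hF : ringChar F ≠ 2) :
    ∑ u : F, ∑ v : F, (if u * v = 1 then quadraticChar F (u * v * (u + 1) * (v + 1)) else 0) =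
      -quadraticChar F (-1) := by
  have inner : ∀ u : F, ∑ v : F,
      (if u * v = 1 then quadraticChar F (u * v * (u + 1) * (v + 1)) else 0) =
        quadraticChar F u - if u = -1 then quadraticChar F (-1) else 0 := by
    intro u
    rcases eq_or_ne u 0 with rfl | hu
    · simp
    have harg : u * u⁻¹ * (u + 1) * (u⁻¹ + 1) = u * (u⁻¹ * (u + 1)) ^ 2 := by
      field_simp
      ring
    simp only [mul_comm u, mul_eq_one_iff_eq_inv₀ hu, sum_ite_eq', mem_univ, if_true]
    rw [mul_comm u⁻¹ u, harg, map_mul]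
    split_ifs with h
    · simp [h]
    · have hu1 : u + 1 ≠ 0 := by rwa [Ne, add_eq_zero_iff_eq_neg]
      rw [quadraticChar_sq_one' (mul_ne_zero (inv_ne_zero hu) hu1), mul_one, sub_zero]
  simp only [inner, sum_sub_distrib, quadraticChar_sum_zero hF, sum_ite_eq', mem_univ, if_true,
    zero_sub]

noncomputable def hyperbolaTerm (d : ℕ) (u v : ℤ) : ℂ :=
  if (d : ℤ) ∣ u * v - 1 then (jacobiSym (u * v * (u + 1) * (v + 1)) d : ℂ) else 0

noncomputable def hyperbolaSum (d : ℕ) : ℂ :=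
  ∑ u ∈ range d, ∑ v ∈ range d, hyperbolaTerm d u v

lemma jacobiSym_eq_quadraticChar (p : ℕ) [Fact p.Prime] (a : ℤ) :
    jacobiSym a p = quadraticChar (ZMod p) a :=
  (jacobiSym.legendreSym.to_jacobiSym p a).symm

lemma hyperbolaSum_prime {p : ℕ} [Fact p.Prime] (hp : p ≠ 2) :
    hyperbolaSum p = -jacobiSym (-1) p := by
  have hF : ringChar (ZMod p) ≠ 2 := by rwa [ZMod.ringChar_zmod_n]
  rw [hyperbolaSum, jacobiSym_eq_quadraticChar, Int.cast_neg, Int.cast_one, ← Int.cast_neg,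
    ← quadraticChar_sum_hyperbola hF]
  simp only [hyperbolaTerm, sum_range_eq_sum_zmod, Int.cast_sum, apply_ite (Int.cast : ℤ → ℂ),
    Int.cast_zero, ← ZMod.intCast_zmod_eq_zero_iff_dvd, jacobiSym_eq_quadraticChar]
  push_cast
  simp [sub_eq_zero]

lemma hyperbolaSum_one : hyperbolaSum 1 = 1 := by
  simp [hyperbolaSum, hyperbolaTerm]

lemma hyperbolaSum_mul {d m : ℕ} [NeZero d] [NeZero m] (h : d.Coprime m) :
    hyperbolaSum (d * m) = hyperbolaSum d * hyperbolaSum m := by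
  refine sum_range_mul_eq_mul_of_coprime h _ _ _ fun u v u₁ v₁ u₂ v₂ hu₁ hv₁ hu₂ hv₂ => ?_
  simp only [hyperbolaTerm]
  have hdvd : ((d * m : ℕ) : ℤ) ∣ u * v - 1 ↔ (d : ℤ) ∣ u₁ * v₁ - 1 ∧ (m : ℤ) ∣ u₂ * v₂ - 1 := by
    rw [← (show u * v - 1 ≡ u₁ * v₁ - 1 [ZMOD d] by gcongr).dvd_iff,
      ← (show u * v - 1 ≡ u₂ * v₂ - 1 [ZMOD m] by gcongr).dvd_iff, Nat.cast_mul]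
    exact ⟨fun h' => ⟨dvd_of_mul_right_dvd h', dvd_of_mul_left_dvd h'⟩,
      fun ⟨h₁, h₂⟩ => (Nat.isCoprime_iff_coprime.2 h).mul_dvd h₁ h₂⟩
  rw [ite_zero_mul_ite_zero]
  refine ite_congr (propext hdvd) (fun _ => ?_) fun _ => rfl
  rw [jacobiSym_mul_right_of_modEq (a₁ := u₁ * v₁ * (u₁ + 1) * (v₁ + 1))
    (a₂ := u₂ * v₂ * (u₂ + 1) * (v₂ + 1)) (by gcongr) (by gcongr), Int.cast_mul]

theorem hyperbolaSum_eq_moebius_mul_jacobiSym {d : ℕ} (hodd : Odd d) (hsf : Squarefree d) :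
    hyperbolaSum d = (ArithmeticFunction.moebius d : ℂ) * (jacobiSym (-1) d : ℂ) := by
  induction d using Nat.recOnPosPrimePosCoprime with
  | prime_pow p k hp hk =>
    obtain rfl : k = 1 := ((Nat.squarefree_pow_iff hp.ne_one hk.ne').1 hsf).2
    have : Fact p.Prime := ⟨hp⟩
    rw [pow_one, hyperbolaSum_prime (by rintro rfl; exact absurd hodd (by decide)),
      ArithmeticFunction.moebius_apply_prime hp]
    push_cast
    ring
  | zero => exact absurd hodd Nat.not_odd_zero
  | one => simp [hyperbolaSum_one]
  | coprime a b ha hb hab iha ihb =>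
    obtain ⟨-, hsfa, hsfb⟩ := Nat.squarefree_mul_iff.1 hsf
    have : NeZero a := ⟨by omega⟩
    have : NeZero b := ⟨by omega⟩
    rw [hyperbolaSum_mul hab, iha (hodd.of_dvd_nat (dvd_mul_right a b)) hsfa,
      ihb (hodd.of_dvd_nat (dvd_mul_left b a)) hsfb,
      ArithmeticFunction.isMultiplicative_moebius.map_mul_of_coprime hab, jacobiSym.mul_right]
    push_cast
    ring

noncomputable def Hstratum (w : ℤ) (q d : ℕ) : ℂ :=
  ∑ u ∈ range q, ∑ v ∈ range q,
    if Int.gcd ((u : ℤ) * v - 1) q = d then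
      (jacobiSym ((u : ℤ) * v * ((u : ℤ) + 1) * ((v : ℤ) + 1)) q : ℂ) *
        ec q (((u : ℤ) * v - 1) * w)
    else 0

lemma Hw_eq_sum_Hstratum (w : ℤ) {q : ℕ} (hq : q ≠ 0) :
    Hw w q = ∑ d ∈ q.divisors, Hstratum w q d := by
  symm
  simp only [Hw, Hstratum]
  rw [sum_comm]
  refine sum_congr rfl fun u _ => ?_
  rw [sum_comm]
  refine sum_congr rfl fun v _ => ?_
  rw [sum_ite_eq, if_pos (Nat.mem_divisors.2 ⟨?_, hq⟩)]
  simpa using Int.gcd_dvd_natAbs_right ((u : ℤ) * v - 1) q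

lemma Hstratum_mul_eq {d m : ℕ} [NeZero d] [NeZero m] (h : d.Coprime m) (w : ℤ) {dinv : ℤ}
    (hdinv : dinv * d ≡ 1 [ZMOD m]) :
    Hstratum w (d * m) d = hyperbolaSum d * Hstar (dinv * w) m := by
  refine sum_range_mul_eq_mul_of_coprime h
    (fun x y => if Int.gcd (x * y - 1) (d * m : ℕ) = d then
      (jacobiSym (x * y * (x + 1) * (y + 1)) (d * m) : ℂ) * ec (d * m) ((x * y - 1) * w) else 0)
    (hyperbolaTerm d)
    (fun x y => if Int.gcd (x * y - 1) m = 1 then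
      (jacobiSym (x * y * (x + 1) * (y + 1)) m : ℂ) * ec m ((x * y - 1) * (dinv * w)) else 0)
    fun u v u₁ v₁ u₂ v₂ hu₁ hv₁ hu₂ hv₂ => ?_
  have hd : u * v - 1 ≡ u₁ * v₁ - 1 [ZMOD d] := by gcongr
  have hm : u * v - 1 ≡ u₂ * v₂ - 1 [ZMOD m] := by gcongr
  have hcond : Int.gcd (u * v - 1) (d * m : ℕ) = d ↔
      (d : ℤ) ∣ u₁ * v₁ - 1 ∧ Int.gcd (u₂ * v₂ - 1) m = 1 := by
    rw [Int.gcd_mul_eq_left_iff h, hd.dvd_iff, hm.gcd_eq]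
  have hec : dinv * ((u * v - 1) * w) ≡ (u₂ * v₂ - 1) * (dinv * w) [ZMOD m] := by
    rw [show (u₂ * v₂ - 1) * (dinv * w) = dinv * ((u₂ * v₂ - 1) * w) by ring]
    gcongr
  simp only [hyperbolaTerm]
  rw [ite_zero_mul_ite_zero]
  refine ite_congr (propext hcond) (fun hc => ?_) fun _ => rfl
  rw [jacobiSym_mul_right_of_modEq (a₁ := u₁ * v₁ * (u₁ + 1) * (v₁ + 1))
    (a₂ := u₂ * v₂ * (u₂ + 1) * (v₂ + 1)) (by gcongr) (by gcongr),
    ec_mul_eq_of_dvd (by simpa using hd.dvd_iff.2 hc.1 |>.mul_right w) hdinv, ec_congr hec]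
  push_cast
  ring

theorem Hw_eq_sum_Hstar_general (q : ℕ) (hodd : Odd q) (hsf : Squarefree q) (w : ℤ)
    (inv : ℕ → ℤ) (hinv : ∀ d ∈ q.divisors, ((q / d : ℕ) : ℤ) ∣ (inv d * d - 1)) :
    Hw w q = ∑ d ∈ q.divisors,
      (ArithmeticFunction.moebius d : ℂ) * (jacobiSym (-1) d : ℂ) * Hstar (inv d * w) (q / d) := by
  rw [Hw_eq_sum_Hstratum w hodd.pos.ne']
  refine sum_congr rfl fun d hd => ?_
  have hdq : d * (q / d) = q := Nat.mul_div_cancel' (Nat.dvd_of_mem_divisors hd)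
  obtain ⟨hcop, hsfd, -⟩ := Nat.squarefree_mul_iff.1 (hdq ▸ hsf)
  have : NeZero d := ⟨(Nat.pos_of_mem_divisors hd).ne'⟩
  have : NeZero (q / d) := ⟨right_ne_zero_of_mul (hdq ▸ hodd.pos.ne')⟩
  conv_lhs => rw [← hdq]
  rw [Hstratum_mul_eq hcop w (Int.modEq_iff_dvd.2 (hinv d hd)).symm,
    hyperbolaSum_eq_moebius_mul_jacobiSym (hodd.of_dvd_nat (Nat.dvd_of_mem_divisors hd)) hsfd]

/-- for `q > 1` odd squarefree and any integer `w`,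
`H(w; q) = Σ_{q₁ q₂ = q} μ(q₁) χ_{q₁}(−1) H*(q̄₁ w; q₂)`. -/
theorem Hw_eq_sum_Hstar (q : ℕ) (hq : 1 < q) (hodd : Odd q) (hsf : Squarefree q) (w : ℤ)
    (inv : ℕ → ℤ) (hinv : ∀ d ∈ q.divisors, ((q / d : ℕ) : ℤ) ∣ (inv d * d - 1)) :
    Hw w q = ∑ d ∈ q.divisors,
      (ArithmeticFunction.moebius d : ℂ) * (jacobiSym (-1) d : ℂ) * Hstar (inv d * w) (q / d) :=
  Hw_eq_sum_Hstar_general q hodd hsf w inv hinv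
end

section
/- Let p be an odd prime and χ the Legendre symbol modulo p. Then g(χ, χ) · τ(χ) = Σ_{a mod p, a ≢ 0 (mod p)} χ(a) · S(a, a; p)², where g(χ, χ) = Σ_{u, v mod p} χ( u v (u + 1)(v + 1)(u v − 1) ), τ(χ) = Σ_{x mod p} χ(x) e_p(x) is the Gauss sum, and S(a, a; p) is the Kloosterman sum. -/
/-
Expanding the square, `S(a, a; p)² = Σ_{x, y ≠ 0} e_p(a (x + x⁻¹ + y + y⁻¹))`, and summing against
`χ(a)` turns each term into `χ(x + x⁻¹ + y + y⁻¹) τ(χ)`. There are `1 + χ(s² - 4)` elements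
`x ≠ 0` with `x + x⁻¹ = s`, and since `χ` sums to zero along every line, the sum over `x, y`
becomes `Σ_{s, t} χ((s + t)(s² - 4)(t² - 4))`. The Möbius substitution `s = 2(u - 1)/(u + 1)`
identifies this with `g(χ, χ)`: `(s + t)(s² - 4)(t² - 4)` is `u v (u + 1)(v + 1)(u v - 1)` times a
nonzero square.
-/

open Finset

section FiniteField

variable {F : Type*} [Field F] [Fintype F] [DecidableEq F]

lemma card_filter_add_inv_eq (hF : ringChar F ≠ 2) (s : F) :
    (#{x : F | x ≠ 0 ∧ x + x⁻¹ = s} : ℤ) = quadraticChar F (s ^ 2 - 4) + 1 := by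
  have h4 : (4 : F) ≠ 0 := by simpa [show (4 : F) = 2 * 2 by norm_num] using Ring.two_ne_zero hF
  rw [← quadraticChar_card_sqrts hF, Set.toFinset_ofPred]
  congr 1
  refine card_equiv ((Equiv.mulLeft₀ 2 (Ring.two_ne_zero hF)).trans (Equiv.subRight s)) fun x => ?_
  simp only [mem_filter_univ, Equiv.trans_apply, Equiv.mulLeft₀_apply, Equiv.subRight_apply]
  -- `x + x⁻¹ = s` is the quadratic `x ^ 2 - s x + 1 = 0`, whose discriminant is `s ^ 2 - 4`
  have hquad : (2 * x - s) ^ 2 = s ^ 2 - 4 ↔ x * x + 1 = s * x := by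
    rw [← sub_eq_zero, show (2 * x - s) ^ 2 - (s ^ 2 - 4) = 4 * (x * x + 1 - s * x) by ring,
      mul_eq_zero, or_iff_right h4, sub_eq_zero]
  rw [hquad]
  constructor
  · rintro ⟨hx, rfl⟩
    field_simp
  · intro h
    have hx : x ≠ 0 := by
      rintro rfl
      simp at h
    exact ⟨hx, by field_simp; linear_combination h⟩

lemma sum_add_inv_eq {M : Type*} [AddCommGroup M] (hF : ringChar F ≠ 2) (f : F → M) :
    ∑ x with x ≠ 0, f (x + x⁻¹) = ∑ s, (quadraticChar F (s ^ 2 - 4) + 1) • f s := by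
  rw [← sum_fiberwise' _ (fun x => x + x⁻¹)]
  refine sum_congr rfl fun s _ => ?_
  rw [sum_const, filter_filter, ← card_filter_add_inv_eq hF, natCast_zsmul]

lemma sum_quadraticChar_add_left (hF : ringChar F ≠ 2) (s : F) :
    ∑ t, quadraticChar F (s + t) = 0 := by
  rw [Fintype.sum_equiv (Equiv.addLeft s) (fun t => quadraticChar F (s + t)) _ fun _ => rfl,
    quadraticChar_sum_zero hF]

lemma sum_sum_quadraticChar_add_inv_add_add_inv (hF : ringChar F ≠ 2) :
    ∑ x with x ≠ 0, ∑ y with y ≠ 0, quadraticChar F (x + x⁻¹ + (y + y⁻¹)) =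
      ∑ s, ∑ t, quadraticChar F ((s + t) * (s ^ 2 - 4) * (t ^ 2 - 4)) := by
  rw [sum_add_inv_eq hF fun s => ∑ y with y ≠ 0, quadraticChar F (s + (y + y⁻¹))]
  have hinner : ∀ s : F, ∑ y with y ≠ 0, quadraticChar F (s + (y + y⁻¹)) =
      ∑ t, (quadraticChar F (t ^ 2 - 4) + 1) * quadraticChar F (s + t) :=
    fun s => sum_add_inv_eq hF fun t => quadraticChar F (s + t)
  simp only [hinner, smul_eq_mul, mul_sum]
  -- in `(χ(s² - 4) + 1)(χ(t² - 4) + 1) χ(s + t)` all terms but the triple product sum to zero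
  have hs : ∀ s : F, ∑ t, (quadraticChar F (s ^ 2 - 4) + 1) * quadraticChar F (s + t) = 0 :=
    fun s => by rw [← mul_sum, sum_quadraticChar_add_left hF, mul_zero]
  have ht : ∑ s : F, ∑ t : F, quadraticChar F (t ^ 2 - 4) * quadraticChar F (s + t) = 0 := by
    rw [sum_comm]
    refine sum_eq_zero fun t _ => ?_
    simp_rw [← mul_sum, add_comm _ t, sum_quadraticChar_add_left hF, mul_zero]
  calc _ = ∑ s : F, ∑ t : F, (quadraticChar F ((s + t) * (s ^ 2 - 4) * (t ^ 2 - 4)) +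
          (quadraticChar F (s ^ 2 - 4) + 1) * quadraticChar F (s + t) +
          quadraticChar F (t ^ 2 - 4) * quadraticChar F (s + t)) :=
        sum_congr rfl fun s _ => sum_congr rfl fun t _ => by simp only [map_mul]; ring
    _ = _ := by simp only [sum_add_distrib, hs, ht, add_zero]

lemma sum_eq_sum_of_moebius {M : Type*} [AddCommMonoid M] (h2 : (2 : F) ≠ 0) {f g : F → M}
    (hf : f (-1) = 0) (hg : g 2 = 0) (hfg : ∀ u, u + 1 ≠ 0 → f u = g (2 * (u - 1) / (u + 1))) :
    ∑ u, f u = ∑ s, g s := by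
  have h4 : (4 : F) ≠ 0 := by simpa [show (4 : F) = 2 * 2 by norm_num] using h2
  rw [← add_sum_erase _ f (mem_univ (-1)), hf, zero_add,
    ← add_sum_erase _ g (mem_univ 2), hg, zero_add]
  refine sum_nbij' (fun u => 2 * (u - 1) / (u + 1)) (fun s => (2 + s) / (2 - s)) ?_ ?_ ?_ ?_ ?_
  all_goals simp only [mem_erase, mem_univ, and_true, ne_eq]
  · intro u hu h
    have hu' : u + 1 ≠ 0 := fun h' => hu (by linear_combination h')
    field_simp at h
    exact h2 (by linear_combination -h)
  · intro s hs h
    have hs' : 2 - s ≠ 0 := fun h' => hs (by linear_combination -h')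
    field_simp at h
    exact h4 (by linear_combination h)
  · intro u hu
    have hu' : u + 1 ≠ 0 := fun h' => hu (by linear_combination h')
    field_simp
    rw [div_eq_iff (by ring_nf; exact h2)]
    ring
  · intro s hs
    have hs' : 2 - s ≠ 0 := fun h' => hs (by linear_combination -h')
    field_simp
    rw [div_eq_iff (by ring_nf; exact h4)]
    ring
  · intro u hu
    exact hfg u fun h' => hu (by linear_combination h')

lemma quadraticChar_moebius_eq (hF : ringChar F ≠ 2) {u v : F} (hu : u + 1 ≠ 0)
    (hv : v + 1 ≠ 0) :
    quadraticChar F ((2 * (u - 1) / (u + 1) + 2 * (v - 1) / (v + 1)) *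
        ((2 * (u - 1) / (u + 1)) ^ 2 - 4) * ((2 * (v - 1) / (v + 1)) ^ 2 - 4)) =
      quadraticChar F (u * v * (u + 1) * (v + 1) * (u * v - 1)) := by
  have h2 : (2 : F) ≠ 0 := Ring.two_ne_zero hF
  -- `s + t = 4 (u v - 1) / ((u + 1) (v + 1))` and `s ^ 2 - 4 = -16 u / (u + 1) ^ 2`
  have hsq : (2 * (u - 1) / (u + 1) + 2 * (v - 1) / (v + 1)) *
        ((2 * (u - 1) / (u + 1)) ^ 2 - 4) * ((2 * (v - 1) / (v + 1)) ^ 2 - 4) =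
      u * v * (u + 1) * (v + 1) * (u * v - 1) * (32 / ((u + 1) ^ 2 * (v + 1) ^ 2)) ^ 2 := by
    field_simp
    ring
  have hc : 32 / ((u + 1) ^ 2 * (v + 1) ^ 2) ≠ 0 := by
    have : (32 : F) = 2 ^ 5 := by norm_num
    rw [this]
    exact div_ne_zero (pow_ne_zero _ h2) (mul_ne_zero (pow_ne_zero _ hu) (pow_ne_zero _ hv))
  rw [hsq, map_mul, quadraticChar_sq_one' hc, mul_one]

lemma sum_sum_quadraticChar_mul_mul_sub_one (hF : ringChar F ≠ 2) :
    ∑ u, ∑ v, quadraticChar F (u * v * (u + 1) * (v + 1) * (u * v - 1)) =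
      ∑ s, ∑ t, quadraticChar F ((s + t) * (s ^ 2 - 4) * (t ^ 2 - 4)) := by
  have h2 : (2 : F) ≠ 0 := Ring.two_ne_zero hF
  have h24 : (2 : F) ^ 2 - 4 = 0 := by norm_num
  refine sum_eq_sum_of_moebius h2 (by simp) (by simp [h24]) fun u hu => ?_
  exact sum_eq_sum_of_moebius h2 (by simp) (by simp [h24])
    fun v hv => (quadraticChar_moebius_eq hF hu hv).symm

end FiniteField

lemma gaussSum_mulShift_eq_of_ne_one {F R : Type*} [Field F] [Fintype F] [CommRing R] [IsDomain R]
    {χ : MulChar F R} (hχ : χ ≠ 1) (ψ : AddChar F R) (t : F) :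
    gaussSum χ (ψ.mulShift t) = χ⁻¹ t * gaussSum χ ψ := by
  rcases eq_or_ne t 0 with rfl | ht
  · rw [AddChar.mulShift_zero, gaussSum_one_right hχ, MulChar.map_zero, zero_mul]
  · simpa using gaussSum_mulShift_eq χ ψ (Units.mk0 t ht)

lemma sum_mul_sum_addChar_sq {F R ι : Type*} [Field F] [Fintype F] [CommRing R] [IsDomain R]
    {χ : MulChar F R} (hχ : χ ≠ 1) (ψ : AddChar F R) (s : Finset ι) (f : ι → F) :
    ∑ a, χ a * (∑ x ∈ s, ψ (f x * a)) ^ 2 =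
      (∑ x ∈ s, ∑ y ∈ s, χ⁻¹ (f x + f y)) * gaussSum χ ψ := by
  have hsq : ∀ a, (∑ x ∈ s, ψ (f x * a)) ^ 2 = ∑ x ∈ s, ∑ y ∈ s, ψ.mulShift (f x + f y) a :=
    fun a => by simp only [sq, sum_mul_sum, AddChar.mulShift_apply, add_mul, AddChar.map_add_eq_mul]
  simp only [hsq, mul_sum, sum_mul]
  rw [sum_comm]
  refine sum_congr rfl fun x _ => ?_
  rw [sum_comm]
  refine sum_congr rfl fun y _ => ?_
  rw [← gaussSum_mulShift_eq_of_ne_one hχ, gaussSum]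

lemma sum_range_eq_sum_zmod_val {M : Type*} [AddCommMonoid M] (n : ℕ) [NeZero n] (f : ℕ → M) :
    ∑ x ∈ range n, f x = ∑ x : ZMod n, f x.val :=
  sum_nbij' (↑) ZMod.val (fun _ _ => mem_univ _) (fun a _ => mem_range.2 a.val_lt)
    (fun _ ha => ZMod.val_cast_of_lt (mem_range.1 ha)) (fun a _ => ZMod.natCast_zmod_val a)
    fun _ ha => by rw [ZMod.val_cast_of_lt (mem_range.1 ha)]

lemma ec_eq_stdAddChar (n : ℕ) [NeZero n] (x : ℤ) : ec n x = ZMod.stdAddChar (x : ZMod n) := by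
  rw [ZMod.stdAddChar_coe]
  rfl

section Prime

variable (p : ℕ) [Fact p.Prime]

lemma gaussτ_eq_gaussSum :
    gaussτ p = gaussSum ((quadraticChar (ZMod p)).ringHomComp (Int.castRingHom ℂ))
      ZMod.stdAddChar := by
  simp [gaussτ, gaussSum, sum_range_eq_sum_zmod_val, ← jacobiSym.legendreSym.to_jacobiSym, legendreSym, ec_eq_stdAddChar]

lemma kloos_eq_sum_ne_zero (m n : ℤ) :
    kloos m n p = ∑ x : ZMod p with x ≠ 0, ZMod.stdAddChar (x * m + x⁻¹ * n : ZMod p) := by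
  have hcond : ∀ a d : ℕ, a * d % p = 1 % p ↔ (a : ZMod p) * d = 1 := fun a d => by
    rw [← ZMod.natCast_eq_natCast_iff', Nat.cast_mul, Nat.cast_one]
  have hinv : ∀ x : ZMod p,
      ∑ y, (if x * y = 1 then ZMod.stdAddChar (x * m + y * n : ZMod p) else 0) =
        if x ≠ 0 then ZMod.stdAddChar (x * m + x⁻¹ * n : ZMod p) else (0 : ℂ) := fun x => by
    rcases eq_or_ne x 0 with rfl | hx
    · simp
    · simp [mul_eq_one_iff_inv_eq₀ hx, hx]
  simp only [kloos, hcond, ec_eq_stdAddChar, sum_range_eq_sum_zmod_val]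
  push_cast
  simp only [ZMod.natCast_val, ZMod.cast_id', id, hinv, sum_filter]

lemma sum_Ico_jacobiSym_mul_kloos_sq :
    ∑ a ∈ Ico 1 p, (jacobiSym (a : ℤ) p : ℂ) * kloos (a : ℤ) (a : ℤ) p ^ 2 =
      ∑ a : ZMod p, (quadraticChar (ZMod p)).ringHomComp (Int.castRingHom ℂ) a *
        (∑ x : ZMod p with x ≠ 0, ZMod.stdAddChar ((x + x⁻¹) * a)) ^ 2 := by
  have hp := (Fact.out : p.Prime)
  have hrange : ∑ a ∈ Ico 1 p, (jacobiSym (a : ℤ) p : ℂ) * kloos (a : ℤ) (a : ℤ) p ^ 2 =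
      ∑ a ∈ range p, (jacobiSym (a : ℤ) p : ℂ) * kloos (a : ℤ) (a : ℤ) p ^ 2 := by
    rw [range_eq_Ico, sum_eq_sum_Ico_succ_bot hp.pos]
    simp [jacobiSym.zero_left hp.one_lt]
  rw [hrange]
  simp only [sum_range_eq_sum_zmod_val, ← jacobiSym.legendreSym.to_jacobiSym, legendreSym, kloos_eq_sum_ne_zero]
  push_cast
  simp only [ZMod.natCast_val, ZMod.cast_id', id, add_mul]
  rfl

end Prime

/-- equation (14.8): for `p` an odd prime,
`g(χ, χ) τ(χ) = Σ_{a mod p, a ≢ 0} χ(a) S(a, a; p)²`. -/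
theorem g_chi_chi_times_gauss (p : ℕ) (hp : p.Prime) (hodd : Odd p) :
    (∑ u ∈ Finset.range p, ∑ v ∈ Finset.range p,
        (jacobiSym ((u : ℤ) * v * ((u : ℤ) + 1) * ((v : ℤ) + 1) * ((u : ℤ) * v - 1)) p : ℂ)) *
        gaussτ p =
      ∑ a ∈ Finset.Ico 1 p, (jacobiSym (a : ℤ) p : ℂ) * kloos (a : ℤ) (a : ℤ) p ^ 2 := by
  have := Fact.mk hp
  have hF : ringChar (ZMod p) ≠ 2 := by
    rw [ZMod.ringChar_zmod_n]
    rintro rfl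
    exact Nat.not_odd_iff_even.2 even_two hodd
  set χ := (quadraticChar (ZMod p)).ringHomComp (Int.castRingHom ℂ)
  have hχ : χ ≠ 1 := (MulChar.ringHomComp_ne_one_iff Int.cast_injective).2 (quadraticChar_ne_one hF)
  have hχ_inv : χ⁻¹ = χ := ((quadraticChar_isQuadratic _).comp _).inv
  have hg : (∑ u ∈ range p, ∑ v ∈ range p,
        (jacobiSym ((u : ℤ) * v * ((u : ℤ) + 1) * ((v : ℤ) + 1) * ((u : ℤ) * v - 1)) p : ℂ)) =
      ((∑ u : ZMod p, ∑ v : ZMod p,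
        quadraticChar (ZMod p) (u * v * (u + 1) * (v + 1) * (u * v - 1)) : ℤ) : ℂ) := by
    simp only [sum_range_eq_sum_zmod_val, ← jacobiSym.legendreSym.to_jacobiSym, legendreSym]
    push_cast
    simp only [ZMod.natCast_val, ZMod.cast_id', id]
  rw [hg, gaussτ_eq_gaussSum, sum_Ico_jacobiSym_mul_kloos_sq, sum_mul_sum_addChar_sq hχ, hχ_inv,
    sum_sum_quadraticChar_mul_mul_sub_one hF, ← sum_sum_quadraticChar_add_inv_add_add_inv hF]
  push_cast
  simp only [χ, MulChar.ringHomComp_apply, eq_intCast]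
end
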